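/- arXiv:2601.18170 — 2 statements merged into one kernel-verified Lean document; each statement's English description precedes it below -/
import Mathlib

section
/- Fix d ≥ 2 and c > 0, and for n ≥ 3 let b̃_n = ln n - ln ln ln n - ln c (defined for n large enough that all logarithms are positive). Then as n → ∞, the expected number E ρ_n(b̃_n) = n ∫_0^{b̃_n} (y^{d-1}/(d-1)!) e^{-y} (1-e^{-y})^{n-1} dy of maxima with ℓ¹-norm at most b̃_n among n i.i.d. vectors with independent Exponential(1) coordinates satisfies E ρ_n(b̃_n) ~ (1/(d-1)!) (ln n)^{d-1-c}. -/
open MeasureTheory Real Filter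


noncomputable def Lf (n : ℕ) : ℝ := Real.log n
noncomputable def bf (c : ℝ) (n : ℕ) : ℝ :=
  Real.log n - Real.log (Real.log (Real.log n)) - Real.log c

lemma deriv_one_sub_exp (y : ℝ) :
    HasDerivAt (fun y : ℝ => 1 - Real.exp (-y)) (Real.exp (-y)) y := by
  have h1 : HasDerivAt (fun y : ℝ => Real.exp (-y)) (-Real.exp (-y)) y := by
    simpa [Function.comp_def] using (Real.hasDerivAt_exp (-y)).comp y (hasDerivAt_neg y)
  simpa using h1.const_sub 1

lemma deriv_pow_one_sub_exp (n : ℕ) (y : ℝ) :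
    HasDerivAt (fun y : ℝ => (1 - Real.exp (-y)) ^ n)
      ((n : ℝ) * (1 - Real.exp (-y)) ^ (n - 1) * Real.exp (-y)) y :=
  (deriv_one_sub_exp y).pow n

lemma ibp_key (d n : ℕ) (hd : 2 ≤ d) (b : ℝ) (hb : 0 ≤ b) :
    ∫ y in (0:ℝ)..b, y ^ (d - 1) * ((n : ℝ) * (1 - Real.exp (-y)) ^ (n - 1) * Real.exp (-y))
      = b ^ (d - 1) * (1 - Real.exp (-b)) ^ n
        - ∫ y in (0:ℝ)..b, ((d - 1 : ℕ) : ℝ) * y ^ (d - 1 - 1) * (1 - Real.exp (-y)) ^ n := by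
  have h := intervalIntegral.integral_mul_deriv_eq_deriv_mul
    (u := fun y : ℝ => y ^ (d - 1)) (u' := fun y : ℝ => ((d - 1 : ℕ) : ℝ) * y ^ (d - 1 - 1))
    (v := fun y : ℝ => (1 - Real.exp (-y)) ^ n)
    (v' := fun y : ℝ => (n : ℝ) * (1 - Real.exp (-y)) ^ (n - 1) * Real.exp (-y))
    (a := 0) (b := b)
    (fun x _ => hasDerivAt_pow (d - 1) x)
    (fun x _ => deriv_pow_one_sub_exp n x)
    (by apply Continuous.intervalIntegrable; fun_prop)
    (by apply Continuous.intervalIntegrable; fun_prop)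
  rw [h]
  have hd1 : d - 1 ≠ 0 := by omega
  simp [zero_pow hd1]

lemma ftc_key (n : ℕ) (hn : 0 < n) (b : ℝ) :
    ∫ y in (0:ℝ)..b, Real.exp (-y) * Real.exp (-((n : ℝ) * Real.exp (-y)))
      = (Real.exp (-((n : ℝ) * Real.exp (-b))) - Real.exp (-(n : ℝ))) / n := by
  have hn' : (n : ℝ) ≠ 0 := Nat.cast_ne_zero.mpr hn.ne'
  have hg : ∀ y : ℝ, HasDerivAt (fun y : ℝ => Real.exp (-((n : ℝ) * Real.exp (-y))) / n)
      (Real.exp (-y) * Real.exp (-((n : ℝ) * Real.exp (-y)))) y := by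
    intro y
    have h1 : HasDerivAt (fun y : ℝ => Real.exp (-y)) (-Real.exp (-y)) y := by
      simpa [Function.comp_def] using (Real.hasDerivAt_exp (-y)).comp y (hasDerivAt_neg y)
    have h2 : HasDerivAt (fun y : ℝ => -((n : ℝ) * Real.exp (-y))) ((n : ℝ) * Real.exp (-y)) y := by
      refine (h1.const_mul (n : ℝ)).neg.congr_deriv ?_; ring
    have h3 : HasDerivAt (fun y : ℝ => Real.exp (-((n : ℝ) * Real.exp (-y))))
        (Real.exp (-((n : ℝ) * Real.exp (-y))) * ((n : ℝ) * Real.exp (-y))) y :=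
      (Real.hasDerivAt_exp _).comp y h2
    have h4 := h3.div_const (n : ℝ)
    refine h4.congr_deriv ?_
    rw [div_eq_iff hn']
    ring
  rw [intervalIntegral.integral_eq_sub_of_hasDerivAt (fun x _ => hg x)
    (by apply Continuous.intervalIntegrable; fun_prop)]
  simp [div_sub_div_same]

lemma pow_one_sub_bounds (n : ℕ) (x : ℝ) (h0 : 0 ≤ x) (h1 : x ≤ 1/2) :
    (1 - n * x^2) * Real.exp (-((n:ℝ) * x)) ≤ (1-x)^n ∧ (1-x)^n ≤ Real.exp (-((n:ℝ)*x)) := by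
  have hx1 : x ≤ 1 := by linarith
  have he : Real.exp (-((n:ℝ)*x)) = Real.exp (-x) ^ n := by
    rw [← Real.exp_nat_mul]; ring_nf
  constructor
  · have hstep : (1 - x^2) * Real.exp (-x) ≤ 1 - x := by
      have h := Real.add_one_le_exp x
      have hepos := Real.exp_pos (-x)
      have hxx : (x+1) * Real.exp (-x) ≤ 1 := by
        have := mul_le_mul_of_nonneg_right h hepos.le
        rwa [← Real.exp_add, add_neg_cancel, Real.exp_zero] at this
      nlinarith
    have hb0 : 0 ≤ (1 - x^2) * Real.exp (-x) := by
      have hx2 : 0 ≤ 1 - x^2 := by nlinarith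
      exact mul_nonneg hx2 (Real.exp_pos _).le
    have hpow : ((1 - x^2) * Real.exp (-x))^n ≤ (1-x)^n := pow_le_pow_left₀ hb0 hstep n
    have hbern : 1 + (n:ℝ) * (-(x^2)) ≤ (1 + (-(x^2)))^n := one_add_mul_le_pow (by nlinarith) n
    have hb2 : (1:ℝ) - n*x^2 ≤ (1-x^2)^n := by
      calc (1:ℝ) - n*x^2 = 1 + (n:ℝ)*(-(x^2)) := by ring
        _ ≤ (1 + (-(x^2)))^n := hbern
        _ = (1-x^2)^n := by ring_nf
    calc (1 - n*x^2) * Real.exp (-((n:ℝ)*x))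
        ≤ (1 - x^2)^n * Real.exp (-((n:ℝ)*x)) :=
          mul_le_mul_of_nonneg_right hb2 (Real.exp_pos _).le
      _ = ((1-x^2) * Real.exp (-x))^n := by rw [mul_pow, he]
      _ ≤ (1-x)^n := hpow
  · have h2 : 1 - x ≤ Real.exp (-x) := by linarith [Real.add_one_le_exp (-x)]
    calc (1-x)^n ≤ Real.exp (-x)^n := pow_le_pow_left₀ (by linarith) h2 n
      _ = _ := he.symm

lemma hLtop : Tendsto Lf atTop atTop :=
  Real.tendsto_log_atTop.comp tendsto_natCast_atTop_atTop

lemma hLLtop : Tendsto (fun n => Real.log (Lf n)) atTop atTop :=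
  Real.tendsto_log_atTop.comp hLtop

lemma hLLLtop : Tendsto (fun n => Real.log (Real.log (Lf n))) atTop atTop :=
  Real.tendsto_log_atTop.comp hLLtop

lemma hlogdiv : Tendsto (fun x : ℝ => Real.log x / x) atTop (nhds 0) :=
  Real.isLittleO_log_id_atTop.tendsto_div_nhds_zero

lemma hLLdivL : Tendsto (fun n => Real.log (Lf n) / Lf n) atTop (nhds 0) :=
  hlogdiv.comp hLtop

lemma ev_basic : ∀ᶠ n : ℕ in atTop, 1 ≤ Lf n ∧ 1 ≤ Real.log (Lf n) ∧
    1 ≤ Real.log (Real.log (Lf n)) ∧ Real.log (Lf n) ≤ Lf n ∧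
    Real.log (Real.log (Lf n)) ≤ Real.log (Lf n) ∧ (1:ℝ) ≤ n := by
  filter_upwards [hLtop.eventually_ge_atTop 1, hLLtop.eventually_ge_atTop 1,
    hLLLtop.eventually_ge_atTop 1, tendsto_natCast_atTop_atTop.eventually_ge_atTop (1:ℝ)]
    with n h1 h2 h3 h4
  refine ⟨h1, h2, h3, ?_, ?_, h4⟩
  · linarith [Real.log_le_sub_one_of_pos (show (0:ℝ) < Lf n by linarith)]
  · linarith [Real.log_le_sub_one_of_pos (show (0:ℝ) < Real.log (Lf n) by linarith)]

lemma hLLLdivL : Tendsto (fun n => Real.log (Real.log (Lf n)) / Lf n) atTop (nhds 0) := by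
  apply squeeze_zero' (g := fun n => Real.log (Lf n) / Lf n)
  · filter_upwards [ev_basic] with n ⟨h1, h2, h3, h4, h5, h6⟩
    positivity
  · filter_upwards [ev_basic] with n ⟨h1, h2, h3, h4, h5, h6⟩
    have hL0 : (0:ℝ) < Lf n := by linarith
    gcongr
  · exact hLLdivL

lemma hbL (c : ℝ) : Tendsto (fun n => bf c n / Lf n) atTop (nhds 1) := by
  have h1 : Tendsto (fun n : ℕ => Real.log c / Lf n) atTop (nhds 0) :=
    tendsto_const_nhds.div_atTop hLtop
  have h2 := hLLLdivL
  have heq : ∀ᶠ n : ℕ in atTop, bf c n / Lf n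
      = 1 - Real.log (Real.log (Lf n)) / Lf n - Real.log c / Lf n := by
    filter_upwards [ev_basic] with n ⟨hL1, _, _, _, _, _⟩
    have hL0 : Lf n ≠ 0 := by unfold Lf at *; intro h; rw [h] at hL1; linarith
    unfold bf Lf at *
    field_simp
  have goal : Tendsto (fun n => 1 - Real.log (Real.log (Lf n)) / Lf n - Real.log c / Lf n)
      atTop (nhds 1) := by
    have := ((tendsto_const_nhds (x := (1:ℝ)) (f := atTop (α := ℕ))).sub h2).sub h1
    simpa using this
  exact goal.congr' (heq.mono fun n h => h.symm)

lemma hLn : Tendsto (fun n : ℕ => Lf n / n) atTop (nhds 0) :=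
  hlogdiv.comp tendsto_natCast_atTop_atTop

lemma hL2n : Tendsto (fun n : ℕ => (Lf n)^2 / n) atTop (nhds 0) := by
  have h := Real.tendsto_pow_log_div_mul_add_atTop 1 0 2 one_ne_zero
  simp only [one_mul, add_zero] at h
  exact h.comp tendsto_natCast_atTop_atTop

lemma hxdiv (c : ℝ) (hc : 0 < c) :
    Tendsto (fun n : ℕ => c * Real.log (Lf n) / n) atTop (nhds 0) := by
  apply squeeze_zero' (g := fun n : ℕ => c * (Lf n / n))
  · filter_upwards [ev_basic] with n ⟨h1, h2, h3, h4, h5, h6⟩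
    have : (0:ℝ) < n := by linarith
    positivity
  · filter_upwards [ev_basic] with n ⟨h1, h2, h3, h4, h5, h6⟩
    have hn : (0:ℝ) < n := by linarith
    rw [mul_div_assoc]
    apply mul_le_mul_of_nonneg_left _ hc.le
    gcongr
  · simpa using hLn.const_mul c

lemma hsqdiv (c : ℝ) (hc : 0 < c) :
    Tendsto (fun n : ℕ => (c * Real.log (Lf n))^2 / n) atTop (nhds 0) := by
  apply squeeze_zero' (g := fun n : ℕ => c^2 * ((Lf n)^2 / n))
  · filter_upwards [ev_basic] with n ⟨h1, h2, h3, h4, h5, h6⟩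
    have : (0:ℝ) < n := by linarith
    positivity
  · filter_upwards [ev_basic] with n ⟨h1, h2, h3, h4, h5, h6⟩
    have hn : (0:ℝ) < n := by linarith
    have h7 : Real.log (Lf n)^2 ≤ (Lf n)^2 := by nlinarith
    have hnum : (c * Real.log (Lf n))^2 ≤ c^2 * (Lf n)^2 := by
      calc (c * Real.log (Lf n))^2 = c^2 * Real.log (Lf n)^2 := by ring
        _ ≤ c^2 * (Lf n)^2 := mul_le_mul_of_nonneg_left h7 (sq_nonneg c)
    calc (c * Real.log (Lf n))^2 / n ≤ c^2 * (Lf n)^2 / n := by gcongr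
      _ = c^2 * ((Lf n)^2 / n) := by ring
  · simpa using hL2n.const_mul (c^2)

lemma exp_neg_bf (c : ℝ) (hc : 0 < c) (n : ℕ) (hn : 1 ≤ (n:ℝ))
    (hLL : 0 < Real.log (Lf n)) :
    Real.exp (-(bf c n)) = c * Real.log (Lf n) / n := by
  have hn0 : (0:ℝ) < n := by linarith
  unfold bf Lf at *
  rw [show -(Real.log n - Real.log (Real.log (Real.log n)) - Real.log c)
      = Real.log (Real.log (Real.log (n:ℝ))) + Real.log c - Real.log n by ring,
    Real.exp_sub, Real.exp_add, Real.exp_log hLL, Real.exp_log hc, Real.exp_log hn0]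
  ring

lemma ev_bf (c : ℝ) : ∀ᶠ n : ℕ in atTop, 0 ≤ bf c n ∧ bf c n ≤ Lf n := by
  filter_upwards [ev_basic, (hbL c).eventually (eventually_ge_nhds (by norm_num : (1:ℝ)/2 < 1)),
    hLLLtop.eventually_ge_atTop (-Real.log c)] with n ⟨h1, h2, h3, h4, h5, h6⟩ hb2 hc2
  have hL0 : (0:ℝ) < Lf n := by linarith
  constructor
  · by_contra h
    push_neg at h
    have : bf c n / Lf n < 1/2 := by
      calc bf c n / Lf n < 0 := div_neg_of_neg_of_pos h hL0
        _ < 1/2 := by norm_num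
    linarith
  · have : bf c n = Lf n - Real.log (Real.log (Lf n)) - Real.log c := rfl
    rw [this]
    linarith

lemma hP (c : ℝ) (hc : 0 < c) :
    Tendsto (fun n : ℕ => (1 - Real.exp (-(bf c n)))^n * (Lf n)^c) atTop (nhds 1) := by
  apply tendsto_of_tendsto_of_tendsto_of_le_of_le'
    (g := fun n : ℕ => 1 - (c * Real.log (Lf n))^2/n) (h := fun _ : ℕ => (1:ℝ))
  · simpa using (tendsto_const_nhds (x := (1:ℝ)) (f := atTop (α := ℕ))).sub (hsqdiv c hc)
  · exact tendsto_const_nhds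
  · filter_upwards [ev_basic,
      (hxdiv c hc).eventually (eventually_le_nhds (by norm_num : (0:ℝ) < 1/2))]
      with n ⟨h1, h2, h3, h4, h5, h6⟩ hx12
    have hL0 : (0:ℝ) < Lf n := by linarith
    have hLL0 : (0:ℝ) < Real.log (Lf n) := by linarith
    have hn0 : (0:ℝ) < n := by linarith
    have hnne : (n:ℝ) ≠ 0 := hn0.ne'
    set x := c * Real.log (Lf n) / n with hxdef
    have hx0 : 0 ≤ x := by positivity
    have hexp : Real.exp (-(bf c n)) = x := exp_neg_bf c hc n h6 hLL0
    obtain ⟨hlo, _⟩ := pow_one_sub_bounds n x hx0 hx12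
    have hnx : (n:ℝ) * x = c * Real.log (Lf n) := by rw [hxdef]; field_simp
    have hone : Real.exp (-((n:ℝ)*x)) * (Lf n)^c = 1 := by
      have hz : -(c * Real.log (Lf n)) + Real.log (Lf n) * c = 0 := by ring
      rw [hnx, Real.rpow_def_of_pos hL0, ← Real.exp_add, hz, Real.exp_zero]
    have hnx2 : (n:ℝ) * x^2 = (c * Real.log (Lf n))^2 / n := by rw [hxdef]; field_simp
    rw [hexp]
    have hmul := mul_le_mul_of_nonneg_right hlo (Real.rpow_pos_of_pos hL0 c).le
    calc 1 - (c * Real.log (Lf n))^2/n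
        = (1 - (n:ℝ)*x^2) * (Real.exp (-((n:ℝ)*x)) * (Lf n)^c) := by rw [hone, hnx2, mul_one]
      _ = ((1 - (n:ℝ)*x^2) * Real.exp (-((n:ℝ)*x))) * (Lf n)^c := by ring
      _ ≤ (1-x)^n * (Lf n)^c := hmul
  · filter_upwards [ev_basic,
      (hxdiv c hc).eventually (eventually_le_nhds (by norm_num : (0:ℝ) < 1/2))]
      with n ⟨h1, h2, h3, h4, h5, h6⟩ hx12
    have hL0 : (0:ℝ) < Lf n := by linarith
    have hLL0 : (0:ℝ) < Real.log (Lf n) := by linarith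
    have hn0 : (0:ℝ) < n := by linarith
    set x := c * Real.log (Lf n) / n with hxdef
    have hx0 : 0 ≤ x := by positivity
    have hexp : Real.exp (-(bf c n)) = x := exp_neg_bf c hc n h6 hLL0
    obtain ⟨_, hhi⟩ := pow_one_sub_bounds n x hx0 hx12
    have hnx : (n:ℝ) * x = c * Real.log (Lf n) := by rw [hxdef]; field_simp
    have hone : Real.exp (-((n:ℝ)*x)) * (Lf n)^c = 1 := by
      have hz : -(c * Real.log (Lf n)) + Real.log (Lf n) * c = 0 := by ring
      rw [hnx, Real.rpow_def_of_pos hL0, ← Real.exp_add, hz, Real.exp_zero]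
    rw [hexp]
    calc (1-x)^n * (Lf n)^c ≤ Real.exp (-((n:ℝ)*x)) * (Lf n)^c :=
          mul_le_mul_of_nonneg_right hhi (Real.rpow_pos_of_pos hL0 c).le
      _ = 1 := hone

lemma cast_dm1 (d : ℕ) (hd : 2 ≤ d) : ((d-1:ℕ):ℝ) = (d:ℝ) - 1 := by
  have := Nat.cast_sub (show 1 ≤ d by omega) (R := ℝ) (m := 1) (n := d)
  simpa using this

lemma Lp_split (d : ℕ) (hd : 2 ≤ d) (c x : ℝ) (hx : 0 < x) :
    x ^ ((d:ℝ)-1-c) = x^(d-1:ℕ) * x^(-c) := by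
  rw [show (d:ℝ)-1-c = ((d-1:ℕ):ℝ) + (-c) by rw [cast_dm1 d hd]; ring,
    Real.rpow_add hx, Real.rpow_natCast]

lemma hAlim (d : ℕ) (hd : 2 ≤ d) (c : ℝ) (hc : 0 < c) :
    Tendsto (fun n : ℕ => (bf c n)^(d-1) * (1 - Real.exp (-(bf c n)))^n / (Lf n)^((d:ℝ)-1-c))
      atTop (nhds 1) := by
  have h1 := ((hbL c).pow (d-1)).mul (hP c hc)
  rw [one_pow, mul_one] at h1
  apply h1.congr'
  filter_upwards [ev_basic] with n ⟨hL1, _, _, _, _, _⟩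
  have hL0 : (0:ℝ) < Lf n := by linarith
  rw [Lp_split d hd c (Lf n) hL0, Real.rpow_neg hL0.le]
  have hS : (0:ℝ) < (Lf n)^c := Real.rpow_pos_of_pos hL0 c
  rw [div_pow]
  field_simp

lemma hBlim (d : ℕ) (hd : 2 ≤ d) (c : ℝ) (hc : 0 < c) :
    Tendsto (fun n : ℕ =>
        (∫ y in (0:ℝ)..(bf c n), ((d-1:ℕ):ℝ) * y^(d-1-1) * (1 - Real.exp (-y))^n)
          / (Lf n)^((d:ℝ)-1-c))
      atTop (nhds 0) := by
  apply squeeze_zero' (g := fun n : ℕ => ((d-1:ℕ):ℝ) / (c * (Real.log (Lf n) * Lf n)))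
  · filter_upwards [ev_basic, ev_bf c] with n ⟨h1, h2, h3, h4, h5, h6⟩ ⟨hb0, hble⟩
    have hL0 : (0:ℝ) < Lf n := by linarith
    apply div_nonneg _ (Real.rpow_pos_of_pos hL0 _).le
    apply intervalIntegral.integral_nonneg hb0
    intro y hy
    have hy0 : 0 ≤ y := hy.1
    have he1 : Real.exp (-y) ≤ 1 := by
      calc Real.exp (-y) ≤ Real.exp 0 := Real.exp_le_exp.mpr (by linarith)
        _ = 1 := Real.exp_zero
    have hp0 : (0:ℝ) ≤ 1 - Real.exp (-y) := by linarith
    positivity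
  · filter_upwards [ev_basic, ev_bf c] with n ⟨h1, h2, h3, h4, h5, h6⟩ ⟨hb0, hble⟩
    have hL0 : (0:ℝ) < Lf n := by linarith
    have hLL0 : (0:ℝ) < Real.log (Lf n) := by linarith
    have hn0 : (0:ℝ) < n := by linarith
    have hnne : (n:ℝ) ≠ 0 := hn0.ne'
    have hnn : 0 < n := by exact_mod_cast hn0
    have hexp : Real.exp (-(bf c n)) = c * Real.log (Lf n) / n := exp_neg_bf c hc n h6 hLL0
    have hEb : Real.exp (bf c n) = (n:ℝ) / (c * Real.log (Lf n)) := by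
      rw [show bf c n = -(-(bf c n)) by ring, Real.exp_neg, hexp, inv_div]
    have hnexp : (n:ℝ) * Real.exp (-(bf c n)) = c * Real.log (Lf n) := by
      rw [hexp]; field_simp
    have hRc : Real.exp (-((n:ℝ) * Real.exp (-(bf c n)))) = (Lf n)^(-c) := by
      rw [hnexp, Real.rpow_def_of_pos hL0]; ring_nf
    set k := d - 1 - 1 with hk
    -- pointwise bound and monotonicity
    have hmono : (∫ y in (0:ℝ)..(bf c n), y^k * (1 - Real.exp (-y))^n)
        ≤ ∫ y in (0:ℝ)..(bf c n),
            ((bf c n)^k * Real.exp (bf c n)) * (Real.exp (-y) * Real.exp (-((n:ℝ) * Real.exp (-y)))) := by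
      apply intervalIntegral.integral_mono_on hb0
        (by apply Continuous.intervalIntegrable; fun_prop)
        (by apply Continuous.intervalIntegrable; fun_prop)
      intro y hy
      obtain ⟨hy0, hyb⟩ := hy
      have hyk : y^k ≤ (bf c n)^k := pow_le_pow_left₀ hy0 hyb k
      have he1 : Real.exp (-y) ≤ 1 := by
        calc Real.exp (-y) ≤ Real.exp 0 := Real.exp_le_exp.mpr (by linarith)
          _ = 1 := Real.exp_zero
      have hp00 : (0:ℝ) ≤ 1 - Real.exp (-y) := by linarith
      have hp : (1 - Real.exp (-y))^n ≤ Real.exp (-((n:ℝ) * Real.exp (-y))) := by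
        have hb1 : 1 - Real.exp (-y) ≤ Real.exp (-Real.exp (-y)) := by
          linarith [Real.add_one_le_exp (-Real.exp (-y))]
        calc (1 - Real.exp (-y))^n ≤ (Real.exp (-Real.exp (-y)))^n := pow_le_pow_left₀ hp00 hb1 n
          _ = Real.exp (-((n:ℝ) * Real.exp (-y))) := by rw [← Real.exp_nat_mul]; ring_nf
      have hfac : Real.exp (-((n:ℝ) * Real.exp (-y)))
          ≤ Real.exp (bf c n) * (Real.exp (-y) * Real.exp (-((n:ℝ) * Real.exp (-y)))) := by
        have h2 : (1:ℝ) ≤ Real.exp (bf c n) * Real.exp (-y) := by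
          rw [← Real.exp_add]
          calc (1:ℝ) = Real.exp 0 := Real.exp_zero.symm
            _ ≤ Real.exp (bf c n + -y) := Real.exp_le_exp.mpr (by linarith)
        nlinarith [Real.exp_pos (-((n:ℝ) * Real.exp (-y)))]
      calc y^k * (1 - Real.exp (-y))^n
          ≤ (bf c n)^k * Real.exp (-((n:ℝ) * Real.exp (-y))) :=
            mul_le_mul hyk hp (pow_nonneg hp00 n) (pow_nonneg hb0 k)
        _ ≤ (bf c n)^k * (Real.exp (bf c n) * (Real.exp (-y) * Real.exp (-((n:ℝ) * Real.exp (-y))))) :=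
            mul_le_mul_of_nonneg_left hfac (pow_nonneg hb0 k)
        _ = ((bf c n)^k * Real.exp (bf c n)) * (Real.exp (-y) * Real.exp (-((n:ℝ) * Real.exp (-y)))) := by
            ring
    rw [intervalIntegral.integral_const_mul, ftc_key n hnn (bf c n)] at hmono
    -- bound the FTC value
    have hE0 : (0:ℝ) < (Lf n)^(-c) := Real.rpow_pos_of_pos hL0 _
    have hmono2 : (∫ y in (0:ℝ)..(bf c n), y^k * (1 - Real.exp (-y))^n)
        ≤ (Lf n)^k * (Lf n)^(-c) / (c * Real.log (Lf n)) := by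
      have hstep : ((bf c n)^k * Real.exp (bf c n)) *
          ((Real.exp (-((n:ℝ) * Real.exp (-(bf c n)))) - Real.exp (-(n:ℝ))) / n)
          ≤ (Lf n)^k * (Lf n)^(-c) / (c * Real.log (Lf n)) := by
        rw [hRc, hEb]
        have hbk : (bf c n)^k ≤ (Lf n)^k := pow_le_pow_left₀ hb0 hble k
        have hexpn : (0:ℝ) < Real.exp (-(n:ℝ)) := Real.exp_pos _
        calc ((bf c n)^k * ((n:ℝ) / (c * Real.log (Lf n)))) *
              (((Lf n)^(-c) - Real.exp (-(n:ℝ))) / n)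
            ≤ ((bf c n)^k * ((n:ℝ) / (c * Real.log (Lf n)))) * ((Lf n)^(-c) / n) := by
              have hbk0 : (0:ℝ) ≤ (bf c n)^k * ((n:ℝ) / (c * Real.log (Lf n))) :=
                mul_nonneg (pow_nonneg hb0 k) (by positivity)
              apply mul_le_mul_of_nonneg_left _ hbk0
              gcongr
              linarith [Real.exp_pos (-(n:ℝ))]
          _ = (bf c n)^k * (Lf n)^(-c) / (c * Real.log (Lf n)) := by field_simp
          _ ≤ (Lf n)^k * (Lf n)^(-c) / (c * Real.log (Lf n)) := by gcongr
      linarith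
    -- combine with denominator
    have hLp : (Lf n)^((d:ℝ)-1-c) = (Lf n)^(d-1:ℕ) * (Lf n)^(-c) := Lp_split d hd c (Lf n) hL0
    have hK : (∫ y in (0:ℝ)..(bf c n), ((d-1:ℕ):ℝ) * y^(d-1-1) * (1 - Real.exp (-y))^n)
        = ((d-1:ℕ):ℝ) * ∫ y in (0:ℝ)..(bf c n), y^k * (1 - Real.exp (-y))^n := by
      rw [← intervalIntegral.integral_const_mul]
      congr 1
      ext y
      rw [hk, mul_assoc]
    rw [hK, hLp]
    have hd1pos : (0:ℝ) ≤ ((d-1:ℕ):ℝ) := Nat.cast_nonneg _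
    have hint_nonneg : True := trivial
    calc ((d-1:ℕ):ℝ) * (∫ y in (0:ℝ)..(bf c n), y^k * (1 - Real.exp (-y))^n)
          / ((Lf n)^(d-1:ℕ) * (Lf n)^(-c))
        ≤ ((d-1:ℕ):ℝ) * ((Lf n)^k * (Lf n)^(-c) / (c * Real.log (Lf n)))
          / ((Lf n)^(d-1:ℕ) * (Lf n)^(-c)) := by
          gcongr
      _ = ((d-1:ℕ):ℝ) / (c * (Real.log (Lf n) * Lf n)) := by
          rw [show d - 1 = k + 1 by omega, pow_succ]
          field_simp
  · exact Tendsto.div_atTop tendsto_const_nhds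
      (((hLLtop.atTop_mul_atTop₀ hLtop)).const_mul_atTop hc)


/-- For fixed `d ≥ 2`, `c > 0`, and `b̃_n = ln n - ln ln ln n - ln c`,
the expected number of maxima with `ℓ¹`-norm at most `b̃_n` among `n` i.i.d. vectors
with independent Exponential(1) coordinates, namely
`E ρ_n(b̃_n) = n ∫_0^{b̃_n} (y^{d-1}/(d-1)!) e^{-y} (1-e^{-y})^{n-1} dy`,
satisfies `E ρ_n(b̃_n) ~ (1/(d-1)!) (ln n)^{d-1-c}` as `n → ∞`. -/
theorem stmt10 (d : ℕ) (hd : 2 ≤ d) (c : ℝ) (hc : 0 < c) :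
    Tendsto
      (fun n : ℕ =>
        ((n : ℝ) *
            ∫ y in Set.Ioc (0 : ℝ)
                (Real.log n - Real.log (Real.log (Real.log n)) - Real.log c),
              y ^ (d - 1) / (Nat.factorial (d - 1)) * Real.exp (-y) *
                (1 - Real.exp (-y)) ^ (n - 1)) /
          ((1 / (Nat.factorial (d - 1))) * (Real.log n) ^ ((d : ℝ) - 1 - c)))
      atTop (nhds 1) := by
  have hF0 : (0:ℝ) < (Nat.factorial (d-1) : ℝ) := by exact_mod_cast Nat.factorial_pos _
  have hA := hAlim d hd c hc
  have hB := hBlim d hd c hc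
  have hsub := hA.sub hB
  rw [sub_zero] at hsub
  apply hsub.congr'
  filter_upwards [ev_basic, ev_bf c] with n ⟨h1, h2, h3, h4, h5, h6⟩ ⟨hb0, hble⟩
  have hL0 : (0:ℝ) < Lf n := by linarith
  have hn0 : (0:ℝ) < n := by linarith
  have hnne : (n:ℝ) ≠ 0 := hn0.ne'
  have hLpne : (Lf n)^((d:ℝ)-1-c) ≠ 0 := (Real.rpow_pos_of_pos hL0 _).ne'
  have hbeq : Real.log (n:ℝ) - Real.log (Real.log (Real.log (n:ℝ))) - Real.log c = bf c n := rfl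
  show _ = ((n : ℝ) * ∫ y in Set.Ioc (0 : ℝ) (Real.log (n:ℝ) - Real.log (Real.log (Real.log (n:ℝ))) - Real.log c),
      y ^ (d - 1) / (Nat.factorial (d - 1)) * Real.exp (-y) *
        (1 - Real.exp (-y)) ^ (n - 1)) / ((1 / (Nat.factorial (d - 1))) * (Real.log (n:ℝ)) ^ ((d : ℝ) - 1 - c))
  rw [hbeq, ← intervalIntegral.integral_of_le hb0]
  have hfi : ∀ y : ℝ, y^(d-1) / (Nat.factorial (d-1) : ℝ) * Real.exp (-y) * (1-Real.exp (-y))^(n-1)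
      = (1/((Nat.factorial (d-1) : ℝ) * n)) *
        (y^(d-1) * ((n:ℝ) * (1-Real.exp (-y))^(n-1) * Real.exp (-y))) := by
    intro y; field_simp
  simp only [hfi]
  rw [intervalIntegral.integral_const_mul, ibp_key d n hd (bf c n) hb0]
  simp only [Lf] at hLpne ⊢
  field_simp
end

section
/- Fix d ≥ 2 and real numbers 0 < u < b. Then the integral ∫_{x ≻ 0, u < ‖x‖ ≤ b} n e^{-‖x‖} exp(-n e^{-‖x‖}) dx over the set of x ∈ (0,∞)^d with u < ∑ x_j ≤ b equals ∫_{n e^{-b}}^{n e^{-u}} ((ln n - ln z)^{d-1}/(d-1)!) e^{-z} dz. -/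
/-!
By induction on the dimension, the push-forward of Lebesgue measure on the open orthant
`(0, ∞)^(m+1)` under `x ↦ ∑ j, x j` has density `y^m / m!` on `(0, ∞)`: splitting off the first
coordinate turns the density into `∫_0^s (s - t)^m / m! dt = s^(m+1) / (m+1)!`. The integral thus
becomes `∫_u^b y^(d-1) / (d-1)! · n e^{-y} exp(-n e^{-y}) dy`, and the substitution
`z = n e^{-y}` gives the right-hand side.
-/

open MeasureTheory Real Set Function
open scoped ENNReal

lemma lintegral_Ioo_pow_sub_div_factorial (m : ℕ) {y : ℝ} (hy : 0 ≤ y) :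
    ∫⁻ t in Ioo 0 y, ENNReal.ofReal ((y - t) ^ m / m.factorial) =
      ENNReal.ofReal (y ^ (m + 1) / (m + 1).factorial) := by
  rw [← ofReal_integral_eq_lintegral_ofReal]
  · rw [← integral_Ioc_eq_integral_Ioo, ← intervalIntegral.integral_of_le hy,
      intervalIntegral.integral_div, intervalIntegral.integral_comp_sub_left (· ^ m) y,
      sub_self, sub_zero, integral_pow, zero_pow m.succ_ne_zero, sub_zero, Nat.factorial_succ]
    push_cast
    congr 1
    field_simp
  · exact (continuous_const.sub continuous_id |>.pow m |>.div_const _).integrableOn_Icc.mono_set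
      Ioo_subset_Icc_self
  · filter_upwards [ae_restrict_mem measurableSet_Ioo] with t ht
    have : 0 ≤ y - t := sub_nonneg.2 ht.2.le
    positivity

lemma setLIntegral_Ioi_comp_const_add (f : ℝ → ℝ≥0∞) (a t : ℝ) :
    ∫⁻ y in Ioi a, f (t + y) = ∫⁻ s in Ioi (a + t), f s := by
  rw [← (measurePreserving_add_left volume t).setLIntegral_comp_preimage_emb
    (measurableEmbedding_addLeft t) f (Ioi (a + t)), preimage_const_add_Ioi, add_sub_cancel_right]

lemma setLIntegral_Ioi_setLIntegral_Ioi_swap {F : ℝ → ℝ → ℝ≥0∞}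
    (hF : Measurable (uncurry F)) (a : ℝ) :
    ∫⁻ t in Ioi a, ∫⁻ s in Ioi t, F t s = ∫⁻ s in Ioi a, ∫⁻ t in Ioo a s, F t s := by
  have hinner (t : ℝ) (ht : t ∈ Ioi a) :
      ∫⁻ s in Ioi t, F t s = ∫⁻ s in Ioi a, (Ioi t).indicator (F t) s := by
    rw [lintegral_indicator measurableSet_Ioi, Measure.restrict_restrict measurableSet_Ioi,
      Ioi_inter_Ioi, max_eq_left (le_of_lt ht)]
  have hmeas : Measurable (uncurry fun t s ↦ (Ioi t).indicator (F t) s) :=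
    Measurable.ite (measurableSet_lt measurable_fst measurable_snd) hF measurable_const
  rw [setLIntegral_congr_fun measurableSet_Ioi hinner,
    lintegral_lintegral_swap hmeas.aemeasurable]
  refine lintegral_congr fun s ↦ ?_
  have : ∀ t, (Ioi t).indicator (F t) s = (Iio s).indicator (fun t ↦ F t s) t := fun t ↦ by
    simp only [indicator_apply, mem_Ioi, mem_Iio]
  simp_rw [this]
  rw [lintegral_indicator measurableSet_Iio, Measure.restrict_restrict measurableSet_Iio,
    Iio_inter_Ioi]

lemma lintegral_comp_sum_pi_restrict_Ioi (m : ℕ) {f : ℝ → ℝ≥0∞} (hf : Measurable f) :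
    ∫⁻ x : Fin (m + 1) → ℝ, f (∑ j, x j) ∂Measure.pi (fun _ ↦ volume.restrict (Ioi 0)) =
      ∫⁻ y in Ioi 0, ENNReal.ofReal (y ^ m / m.factorial) * f y := by
  induction m generalizing f with
  | zero =>
    change ∫⁻ x : Fin 1 → ℝ, f (∑ j, x j) ∂Measure.pi (fun _ ↦ volume.restrict (Ioi 0)) = _
    have hsum (x : Fin 1 → ℝ) : ∑ j, x j = MeasurableEquiv.funUnique (Fin 1) ℝ x :=
      Fin.sum_univ_one x
    rw [lintegral_congr fun x ↦ congrArg f (hsum x)]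
    refine ((measurePreserving_funUnique (volume.restrict (Ioi (0 : ℝ))) (Fin 1)).lintegral_comp
      hf).trans ?_
    simp
  | succ m ih =>
    have hF : Measurable fun p : ℝ × (Fin (m + 1) → ℝ) ↦ f (p.1 + ∑ j, p.2 j) := by fun_prop
    have hsplit :
        ∫⁻ x : Fin (m + 2) → ℝ, f (∑ j, x j) ∂Measure.pi (fun _ ↦ volume.restrict (Ioi 0)) =
        ∫⁻ t in Ioi 0, ∫⁻ x : Fin (m + 1) → ℝ, f (t + ∑ j, x j)
          ∂Measure.pi (fun _ ↦ volume.restrict (Ioi 0)) := by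
      rw [← lintegral_prod _ hF.aemeasurable, ← (measurePreserving_piFinSuccAbove
        (fun _ ↦ volume.restrict (Ioi (0 : ℝ))) 0).lintegral_comp hF]
      simp [Fin.sum_univ_succ, Fin.tail]
    calc _ = ∫⁻ t in Ioi 0, ∫⁻ y in Ioi 0, ENNReal.ofReal (y ^ m / m.factorial) * f (t + y) := by
          rw [hsplit]
          congr with t
          exact ih (hf.comp (measurable_const_add t))
      _ = ∫⁻ t in Ioi 0, ∫⁻ s in Ioi t, ENNReal.ofReal ((s - t) ^ m / m.factorial) * f s := by
          congr with t
          simpa using setLIntegral_Ioi_comp_const_add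
            (fun s ↦ ENNReal.ofReal ((s - t) ^ m / m.factorial) * f s) 0 t
      _ = ∫⁻ s in Ioi 0, ∫⁻ t in Ioo 0 s, ENNReal.ofReal ((s - t) ^ m / m.factorial) * f s :=
          setLIntegral_Ioi_setLIntegral_Ioi_swap (by fun_prop) 0
      _ = _ := setLIntegral_congr_fun measurableSet_Ioi fun s hs ↦ by
          rw [lintegral_mul_const _ (by fun_prop), lintegral_Ioo_pow_sub_div_factorial m hs.le]

lemma integral_comp_sum_pi_restrict_Ioi (m : ℕ) {f : ℝ → ℝ} (hf : Measurable f) (hf₀ : 0 ≤ f) :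
    ∫ x : Fin (m + 1) → ℝ, f (∑ j, x j) ∂Measure.pi (fun _ ↦ volume.restrict (Ioi 0)) =
      ∫ y in Ioi 0, y ^ m / m.factorial * f y := by
  have hnonneg₁ : 0 ≤ᵐ[Measure.pi fun _ ↦ volume.restrict (Ioi 0)]
      fun x : Fin (m + 1) → ℝ ↦ f (∑ j, x j) :=
    ae_of_all _ fun x ↦ hf₀ _
  have hnonneg₂ : 0 ≤ᵐ[volume.restrict (Ioi 0)] fun y ↦ y ^ m / m.factorial * f y := by
    filter_upwards [ae_restrict_mem measurableSet_Ioi] with y (hy : 0 < y)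
    exact mul_nonneg (by positivity) (hf₀ y)
  rw [integral_eq_lintegral_of_nonneg_ae hnonneg₁ (by fun_prop : Measurable _).aestronglyMeasurable,
    integral_eq_lintegral_of_nonneg_ae hnonneg₂ (by fun_prop : Measurable _).aestronglyMeasurable,
    lintegral_comp_sum_pi_restrict_Ioi m hf.ennreal_ofReal]
  congr 1
  refine setLIntegral_congr_fun measurableSet_Ioi fun y (hy : 0 < y) ↦ ?_
  rw [ENNReal.ofReal_mul (by positivity)]

lemma integral_comp_log_sub_log_mul_exp_neg {F : ℝ → ℝ} (hF : Continuous F) {n : ℝ} (hn : 0 < n)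
    (u b : ℝ) :
    ∫ z in n * exp (-b)..n * exp (-u), F (log n - log z) * exp (-z) =
      ∫ y in u..b, F y * (n * exp (-y) * exp (-(n * exp (-y)))) := by
  have hderiv (y : ℝ) (_ : y ∈ uIcc u b) :
      HasDerivAt (fun y ↦ n * exp (-y)) (-(n * exp (-y))) y := by
    simpa using ((hasDerivAt_neg y).exp).const_mul n
  have hpos : (fun y ↦ n * exp (-y)) '' uIcc u b ⊆ {0}ᶜ := by
    rintro _ ⟨y, -, rfl⟩
    exact (mul_pos hn (exp_pos _)).ne'
  have hcont : ContinuousOn (fun z ↦ F (log n - log z) * exp (-z))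
      ((fun y ↦ n * exp (-y)) '' uIcc u b) :=
    (hF.comp_continuousOn (continuousOn_const.sub (continuousOn_log.mono hpos))).mul
      (continuous_exp.comp continuous_neg).continuousOn
  rw [intervalIntegral.integral_symm, ← intervalIntegral.integral_comp_mul_deriv' hderiv
    (by fun_prop) hcont, ← intervalIntegral.integral_neg]
  congr with y
  simp only [Function.comp, log_mul hn.ne' (exp_ne_zero _), log_exp, sub_add_cancel_left, neg_neg]
  ring

/-- For `d ≥ 2` and `0 < u < b`, the integral of
`n e^{-‖x‖} exp(-n e^{-‖x‖})` over `{x ∈ (0,∞)^d : u < ‖x‖ ≤ b}` (with `‖x‖ = ∑ x_j`)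
equals `∫_{n e^{-b}}^{n e^{-u}} ((ln n - ln z)^{d-1}/(d-1)!) e^{-z} dz`. -/
theorem stmt11 (d : ℕ) (hd : 2 ≤ d) (n : ℝ) (hn : 0 < n) (u b : ℝ)
    (hu : 0 < u) (hub : u < b) :
    (∫ x in {x : Fin d → ℝ | (∀ j, 0 < x j) ∧ u < ∑ j, x j ∧ ∑ j, x j ≤ b},
        n * Real.exp (-∑ j, x j) * Real.exp (-(n * Real.exp (-∑ j, x j)))) =
      ∫ z in (n * Real.exp (-b))..(n * Real.exp (-u)),
        (Real.log n - Real.log z) ^ (d - 1) / (Nat.factorial (d - 1)) *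
          Real.exp (-z) := by
  obtain ⟨m, rfl⟩ : ∃ m, d = m + 1 := ⟨d - 1, by omega⟩
  set G : ℝ → ℝ := fun y ↦ n * exp (-y) * exp (-(n * exp (-y)))
  have hG : Measurable G := by fun_prop
  have hS : {x : Fin (m + 1) → ℝ | (∀ j, 0 < x j) ∧ u < ∑ j, x j ∧ ∑ j, x j ≤ b} =
      (fun x ↦ ∑ j, x j) ⁻¹' Ioc u b ∩ univ.pi fun _ ↦ Ioi 0 := by
    ext x
    simp only [mem_ofPred_eq, mem_inter_iff, mem_preimage, mem_Ioc, mem_univ_pi, mem_Ioi]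
    tauto
  have hpre : MeasurableSet ((fun x : Fin (m + 1) → ℝ ↦ ∑ j, x j) ⁻¹' Ioc u b) :=
    measurableSet_preimage (by fun_prop) measurableSet_Ioc
  calc _ = ∫ x, (Ioc u b).indicator G (∑ j, x j)
          ∂Measure.pi (fun _ ↦ volume.restrict (Ioi 0)) := by
        rw [hS, ← Measure.restrict_restrict hpre, volume_pi, Measure.restrict_pi_pi,
          ← integral_indicator hpre]
        rfl
    _ = ∫ y in Ioi 0, y ^ m / m.factorial * (Ioc u b).indicator G y :=
        integral_comp_sum_pi_restrict_Ioi m (hG.indicator measurableSet_Ioc)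
          (indicator_nonneg fun y _ ↦ by positivity)
    _ = ∫ y in u..b, y ^ m / m.factorial * G y := by
        simp_rw [← indicator_mul_right (Ioc u b) (fun y ↦ y ^ m / m.factorial) G]
        rw [integral_indicator measurableSet_Ioc, Measure.restrict_restrict measurableSet_Ioc,
          inter_eq_left.2 (Ioc_subset_Ioi_self.trans (Ioi_subset_Ioi hu.le)),
          intervalIntegral.integral_of_le hub.le]
    _ = _ := by
        rw [Nat.add_sub_cancel]
        exact (integral_comp_log_sub_log_mul_exp_neg (by fun_prop) hn u b).symm
end
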